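/- Let H be a finite-dimensional complex inner product space, q : H → H a projection, and A ≠ 0 a tangent vector at q (qA + Aq = A). Then i[A*,q] is a tangent vector at q and Ω_q(i[A*,q], A) = Tr(A*∘A) > 0, where Ω_q(X,Y) := i·Tr(q(XY − YX)). In particular, Ω_q is a nondegenerate bilinear form on the tangent space at q: for every nonzero tangent A there is a tangent B with Ω_q(B,A) ≠ 0. -/

import Mathlib

/-!
Differentiating `q * q = q` shows that the tangent vectors at `q` are the `A` with
`q * A + A * q = A`; for these `q * A * q = 0`. Commutators `[B, q]` are tangent, and expanding
`Tr (q [[B, q], A])` with cyclicity of the trace and `q * A * q = 0` gives `-Tr (B * A)`, so that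
`Ω_q (i [B, q], A) = Tr (B * A)`. Taking `B = A*` turns this into `Tr (A* A) = ∑ ‖A eᵢ‖²` for an
orthonormal basis `(eᵢ)`, which is positive when `A ≠ 0`.
-/

open LinearMap Complex

section Ring

variable {R : Type*} [Ring R] {q A : R}

def IsTangentAt (q A : R) : Prop := q * A + A * q = A

theorem IsTangentAt.mul_mul_eq_zero (hq : IsIdempotentElem q) (hA : IsTangentAt q A) :
    q * A * q = 0 := by
  have h := congrArg (q * ·) hA
  simp only [mul_add, ← mul_assoc, hq.eq] at h
  simpa using h

theorem isTangentAt_commutator (hq : IsIdempotentElem q) (B : R) :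
    IsTangentAt q (B * q - q * B) := by
  unfold IsTangentAt
  rw [show q * (B * q - q * B) + (B * q - q * B) * q = B * (q * q) - (q * q) * B by noncomm_ring,
    hq.eq]

theorem IsTangentAt.smul {S : Type*} [Monoid S] [DistribMulAction S R] [SMulCommClass S R R]
    [IsScalarTower S R R] (hA : IsTangentAt q A) (c : S) : IsTangentAt q (c • A) := by
  unfold IsTangentAt at hA ⊢
  rw [mul_smul_comm, smul_mul_assoc, ← smul_add, hA]

end Ring

section Trace

variable {R M : Type*} [CommRing R] [AddCommGroup M] [Module R M] {q A : Module.End R M}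

theorem trace_mul_commutator_commutator (hq : IsIdempotentElem q) (hA : IsTangentAt q A)
    (B : Module.End R M) :
    trace R M (q * ((B * q - q * B) * A - A * (B * q - q * B))) = -trace R M (B * A) := by
  have hqAq := hA.mul_mul_eq_zero hq
  have hexpand : q * ((B * q - q * B) * A - A * (B * q - q * B)) =
      q * B * (q * A) - (q * q) * (B * A) - q * (A * B) * q + q * A * q * B := by
    noncomm_ring
  have hqBqA : trace R M (q * B * (q * A)) = 0 := by
    rw [trace_mul_comm, show q * A * (q * B) = q * A * q * B by noncomm_ring, hqAq, zero_mul,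
      map_zero]
  have hqABq : trace R M (q * (A * B) * q) = trace R M (q * (A * B)) := by
    rw [trace_mul_comm, ← mul_assoc, hq.eq]
  have hBA : trace R M (B * A) = trace R M (q * (A * B)) + trace R M (q * (B * A)) := by
    conv_lhs => rw [← hA]
    rw [mul_add, map_add, trace_mul_comm R B (q * A), ← mul_assoc B, trace_mul_comm R (B * A),
      mul_assoc]
  rw [hexpand, hq.eq, hqAq, zero_mul, add_zero, map_sub, map_sub, hqBqA, hqABq, hBA]
  ring

end Trace

section SymplecticForm

variable {M : Type*} [AddCommGroup M] [Module ℂ M] {q A : Module.End ℂ M}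

noncomputable def symplecticForm (q X Y : Module.End ℂ M) : ℂ :=
  I * trace ℂ M (q * (X * Y - Y * X))

theorem symplecticForm_I_smul_commutator (hq : IsIdempotentElem q) (hA : IsTangentAt q A)
    (B : Module.End ℂ M) :
    symplecticForm q (I • (B * q - q * B)) A = trace ℂ M (B * A) := by
  rw [symplecticForm, smul_mul_assoc, mul_smul_comm, ← smul_sub, mul_smul_comm, map_smul,
    trace_mul_commutator_commutator hq hA, smul_eq_mul, ← mul_assoc, I_mul_I]
  ring

end SymplecticForm

theorem LinearMap.trace_adjoint_comp_self_eq_sum_norm_sq {𝕜 E F ι : Type*} [RCLike 𝕜]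
    [NormedAddCommGroup E] [InnerProductSpace 𝕜 E] [NormedAddCommGroup F]
    [InnerProductSpace 𝕜 F] [FiniteDimensional 𝕜 E] [FiniteDimensional 𝕜 F] [Fintype ι]
    (A : E →ₗ[𝕜] F) (b : OrthonormalBasis ι 𝕜 E) :
    trace 𝕜 E (adjoint A ∘ₗ A) = ((∑ i, ‖A (b i)‖ ^ 2 : ℝ) : 𝕜) := by
  rw [trace_eq_sum_inner _ b]
  push_cast
  congr 1
  funext i
  simp [adjoint_inner_right, inner_self_eq_norm_sq_to_K]

theorem LinearMap.exists_pos_trace_adjoint_comp_self {𝕜 E F : Type*} [RCLike 𝕜]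
    [NormedAddCommGroup E] [InnerProductSpace 𝕜 E] [NormedAddCommGroup F]
    [InnerProductSpace 𝕜 F] [FiniteDimensional 𝕜 E] [FiniteDimensional 𝕜 F]
    {A : E →ₗ[𝕜] F} (hA : A ≠ 0) :
    ∃ r : ℝ, 0 < r ∧ trace 𝕜 E (adjoint A ∘ₗ A) = r := by
  let b := stdOrthonormalBasis 𝕜 E
  obtain ⟨i, hi⟩ : ∃ i, A (b i) ≠ 0 := by
    by_contra! h
    exact hA (b.toBasis.ext (by simpa using h))
  refine ⟨_, ?_, A.trace_adjoint_comp_self_eq_sum_norm_sq b⟩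
  exact Finset.sum_pos' (fun j _ => by positivity) ⟨i, Finset.mem_univ i, by positivity⟩

/-- For a projection `q` and a nonzero tangent vector `A` at `q`,
the operator `i[A*,q]` is a tangent vector at `q`, `Ω_q(i[A*,q], A) = Tr(A*∘A)`,
which is a positive real number; in particular `Ω_q` is nondegenerate on the
tangent space at `q`. -/
theorem Omega_nondegenerate
    (H : Type*) [NormedAddCommGroup H] [InnerProductSpace ℂ H] [FiniteDimensional ℂ H]
    (q A : H →ₗ[ℂ] H)
    (hq : q ∘ₗ q = q)
    (hA : q ∘ₗ A + A ∘ₗ q = A)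
    (hA0 : A ≠ 0) :
    (q ∘ₗ (Complex.I • (LinearMap.adjoint A ∘ₗ q - q ∘ₗ LinearMap.adjoint A)) +
        (Complex.I • (LinearMap.adjoint A ∘ₗ q - q ∘ₗ LinearMap.adjoint A)) ∘ₗ q =
      Complex.I • (LinearMap.adjoint A ∘ₗ q - q ∘ₗ LinearMap.adjoint A)) ∧
    (Complex.I * LinearMap.trace ℂ H
        (q ∘ₗ ((Complex.I • (LinearMap.adjoint A ∘ₗ q - q ∘ₗ LinearMap.adjoint A)) ∘ₗ A -
          A ∘ₗ (Complex.I • (LinearMap.adjoint A ∘ₗ q - q ∘ₗ LinearMap.adjoint A)))) =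
      LinearMap.trace ℂ H (LinearMap.adjoint A ∘ₗ A)) ∧
    (∃ r : ℝ, 0 < r ∧ LinearMap.trace ℂ H (LinearMap.adjoint A ∘ₗ A) = (r : ℂ)) ∧
    (∃ B : H →ₗ[ℂ] H, (q ∘ₗ B + B ∘ₗ q = B) ∧
      Complex.I * LinearMap.trace ℂ H (q ∘ₗ (B ∘ₗ A - A ∘ₗ B)) ≠ 0) := by
  have hq_idem : IsIdempotentElem q := hq
  have hX : IsTangentAt q (I • (adjoint A * q - q * adjoint A)) :=
    (isTangentAt_commutator hq_idem _).smul I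
  have hΩ := symplecticForm_I_smul_commutator hq_idem hA (adjoint A)
  obtain ⟨r, hr, htr⟩ := exists_pos_trace_adjoint_comp_self hA0
  refine ⟨hX, hΩ, ⟨r, hr, htr⟩, _, hX, ?_⟩
  change symplecticForm q _ A ≠ 0
  rw [hΩ, Module.End.mul_eq_comp, htr]
  exact ofReal_ne_zero.mpr hr.ne'
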